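/- (Categorical equivalence to vertex-reconstructability) Let V and W be finite types, and let G : SimpleGraph V and H : SimpleGraph W be simple graphs, each with at least 3 vertices. Suppose there is a bijection σ : V → W and, for every vertex v ∈ V, a graph isomorphism γ_v : (G − v) ≅ (H − σ(v)), where G − v denotes the induced subgraph of G on the vertex type {u : V // u ≠ v}. Let D be the disjoint union of the vertex-deleted subgraphs, the simple graph on the vertex type Σ (v : V), {u : V // u ≠ v} whose component indexed by v is G − v, and let Γ : D → H be the graph homomorphism that on the component indexed by v acts as γ_v followed by the inclusion of H − σ(v) into H. Then G is isomorphic to H if and only if there exists a graph homomorphism δ : D → G such that (i) δ is surjective on vertices and every edge of G is the image under δ of some edge of D, and (ii) for all vertices x, y of D, Γ(x) = Γ(y) implies δ(x) = δ(y). -/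

import Mathlib

/-- The disjoint union of the single-edge-deleted subgraphs of `G`: the component
indexed by an edge `e` of `G` is `G` with the edge `e` deleted. -/
def SimpleGraph.edgeDeck {V : Type} (G : SimpleGraph V) :
    SimpleGraph (Σ _e : G.edgeSet, V) where
  Adj x y := x.1 = y.1 ∧ (G.deleteEdges {x.1.1}).Adj x.2 y.2
  symm := by
    constructor
    rintro ⟨e, u⟩ ⟨e', v⟩ ⟨h1, h2⟩
    cases h1
    exact ⟨rfl, h2.symm⟩
  loopless := by
    constructor
    rintro ⟨e, u⟩ ⟨-, h2⟩
    exact (G.deleteEdges {e.1}).loopless.irrefl u h2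

/-- The disjoint union of the single-vertex-deleted subgraphs of `G`: the component
indexed by a vertex `v` of `G` is the induced subgraph of `G` on `{u // u ≠ v}`. -/
def SimpleGraph.vertexDeck {V : Type} (G : SimpleGraph V) :
    SimpleGraph (Σ v : V, {u : V // u ≠ v}) where
  Adj x y := x.1 = y.1 ∧ G.Adj x.2.1 y.2.1
  symm := by
    constructor
    rintro ⟨v, u⟩ ⟨v', u'⟩ ⟨h1, h2⟩
    cases h1
    exact ⟨rfl, h2.symm⟩
  loopless := by
    constructor
    rintro ⟨v, u⟩ ⟨-, h2⟩
    exact G.loopless.irrefl u.1 h2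

/-
If `φ : G ≃g H`, then `δ := φ⁻¹ ∘ Γ` works. Conversely, with at least three vertices every edge
of `H` avoids some `σ v` and hence comes from the card `G − v ≅ H − σ v`, so `Γ` is surjective
on vertices and on edges. A `δ` coequalizing the kernel pair of `Γ` therefore descends to a map
`f : H → G` with `f ∘ Γ = δ`; it is a homomorphism that is surjective on vertices and edges, and
bijective by finiteness, hence an isomorphism.
-/

open Function

namespace SimpleGraph

variable {U V W : Type*} {D : SimpleGraph U} {G : SimpleGraph V} {H : SimpleGraph W}

theorem Hom.surjOn_edgeSet_iff (f : D →g H) :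
    Set.SurjOn (Sym2.map f) D.edgeSet H.edgeSet ↔
      ∀ ⦃w w'⦄, H.Adj w w' → ∃ x y, D.Adj x y ∧ f x = w ∧ f y = w' := by
  refine ⟨fun hf w w' hww => ?_, fun hf e he => ?_⟩
  · obtain ⟨d, hd, hde⟩ := hf (show s(w, w') ∈ H.edgeSet from hww)
    induction d with
    | _ x y =>
      rcases Sym2.eq_iff.mp hde with ⟨hx, hy⟩ | ⟨hx, hy⟩
      · exact ⟨x, y, hd, hx, hy⟩
      · exact ⟨y, x, D.adj_symm hd, hy, hx⟩
  · induction e with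
    | _ w w' =>
      obtain ⟨x, y, hxy, rfl, rfl⟩ := hf he
      exact ⟨s(x, y), hxy, rfl⟩

noncomputable def Iso.ofBijectiveOfSurjOnEdgeSet (f : G →g H) (hf : Bijective f)
    (hfe : Set.SurjOn (Sym2.map f) G.edgeSet H.edgeSet) : G ≃g H where
  toEquiv := Equiv.ofBijective f hf
  map_rel_iff' {v v'} := by
    refine ⟨fun h => ?_, f.map_adj⟩
    obtain ⟨x, y, hxy, hx, hy⟩ := f.surjOn_edgeSet_iff.mp hfe h
    rwa [← hf.injective hx, ← hf.injective hy]

theorem Iso.exists_hom_factorsThrough (φ : G ≃g H) (Γ : D →g H) (hΓ : Surjective Γ)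
    (hΓe : Set.SurjOn (Sym2.map Γ) D.edgeSet H.edgeSet) :
    ∃ δ : D →g G, (Surjective δ ∧ Set.SurjOn (Sym2.map δ) D.edgeSet G.edgeSet) ∧
      FactorsThrough δ Γ := by
  refine ⟨φ.symm.toHom.comp Γ, ⟨φ.symm.surjective.comp hΓ, ?_⟩, fun x y h => ?_⟩
  · refine (Hom.surjOn_edgeSet_iff _).mpr fun v v' hvv => ?_
    obtain ⟨x, y, hxy, hx, hy⟩ := Γ.surjOn_edgeSet_iff.mp hΓe (φ.map_adj_iff.mpr hvv)
    exact ⟨x, y, hxy, by simp [hx], by simp [hy]⟩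
  · simp [h]

theorem nonempty_iso_of_factorsThrough [Finite V] (σ : V ≃ W)
    (Γ : D →g H) (hΓ : Surjective Γ) (hΓe : Set.SurjOn (Sym2.map Γ) D.edgeSet H.edgeSet)
    (δ : D →g G) (hδ : Surjective δ) (hδe : Set.SurjOn (Sym2.map δ) D.edgeSet G.edgeSet)
    (hδΓ : FactorsThrough δ Γ) : Nonempty (G ≃g H) := by
  let f : W → V := δ ∘ surjInv hΓ
  have hfΓ : ∀ x, f (Γ x) = δ x := fun x => hδΓ (surjInv_eq hΓ (Γ x))
  have hf : Surjective f := fun v => by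
    obtain ⟨x, rfl⟩ := hδ v
    exact ⟨Γ x, hfΓ x⟩
  have hfσ : Bijective (f ∘ σ) := Finite.surjective_iff_bijective.mp (hf.comp σ.surjective)
  have hfb : Bijective f := by simpa [comp_assoc] using hfσ.comp σ.symm.bijective
  let F : H →g G :=
    { toFun := f
      map_rel' := fun {w w'} hww => by
        obtain ⟨x, y, hxy, rfl, rfl⟩ := Γ.surjOn_edgeSet_iff.mp hΓe hww
        simpa only [hfΓ] using δ.map_adj hxy }
  have hFe : Set.SurjOn (Sym2.map F) H.edgeSet G.edgeSet := by
    refine F.surjOn_edgeSet_iff.mpr fun v v' hvv => ?_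
    obtain ⟨x, y, hxy, rfl, rfl⟩ := δ.surjOn_edgeSet_iff.mp hδe hvv
    exact ⟨Γ x, Γ y, Γ.map_adj hxy, hfΓ x, hfΓ y⟩
  exact ⟨(Iso.ofBijectiveOfSurjOnEdgeSet F hfb hFe).symm⟩

section vertexDeck

variable {V W : Type} {G : SimpleGraph V} {H : SimpleGraph W} {σ : V ≃ W}
  {γ : ∀ v : V, G.induce {u : V | u ≠ v} ≃g H.induce {w : W | w ≠ σ v}}
  {Γ : G.vertexDeck →g H}

theorem vertexDeck_hom_apply_symm
    (hΓ : ∀ (v : V) (u : {u : V // u ≠ v}), Γ ⟨v, u⟩ = ((γ v) u).1) (v : V)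
    (a : {w : W | w ≠ σ v}) : Γ ⟨v, (γ v).symm a⟩ = a := by
  rw [hΓ, RelIso.apply_symm_apply]

theorem surjective_vertexDeck_hom [Nontrivial V]
    (hΓ : ∀ (v : V) (u : {u : V // u ≠ v}), Γ ⟨v, u⟩ = ((γ v) u).1) :
    Surjective Γ := fun w => by
  obtain ⟨v, hv⟩ := exists_ne (σ.symm w)
  have hw : w ≠ σ v := fun h => hv (σ.eq_symm_apply.mpr h.symm)
  exact ⟨_, vertexDeck_hom_apply_symm hΓ v ⟨w, hw⟩⟩

theorem surjOn_edgeSet_vertexDeck_hom (hV : 3 ≤ ENat.card V)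
    (hΓ : ∀ (v : V) (u : {u : V // u ≠ v}), Γ ⟨v, u⟩ = ((γ v) u).1) :
    Set.SurjOn (Sym2.map Γ) G.vertexDeck.edgeSet H.edgeSet := by
  refine Γ.surjOn_edgeSet_iff.mpr fun w w' hww => ?_
  obtain ⟨v, hv, hv'⟩ := ENat.exists_ne_ne_of_three_le hV (σ.symm w) (σ.symm w')
  have hw : w ≠ σ v := fun h => hv (σ.eq_symm_apply.mpr h.symm)
  have hw' : w' ≠ σ v := fun h => hv' (σ.eq_symm_apply.mpr h.symm)
  refine ⟨⟨v, (γ v).symm ⟨w, hw⟩⟩, ⟨v, (γ v).symm ⟨w', hw'⟩⟩, ⟨rfl, ?_⟩,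
    vertexDeck_hom_apply_symm hΓ v _, vertexDeck_hom_apply_symm hΓ v _⟩
  have hadj : (H.induce {w : W | w ≠ σ v}).Adj ⟨w, hw⟩ ⟨w', hw'⟩ := hww
  exact (γ v).symm.map_adj_iff.mpr hadj

end vertexDeck

end SimpleGraph

theorem vertex_reconstructable_iff_general {V W : Type} [Fintype V]
    (G : SimpleGraph V) (H : SimpleGraph W)
    (hV : 3 ≤ Fintype.card V)
    (σ : V ≃ W)
    (γ : ∀ v : V, G.induce {u : V | u ≠ v} ≃g H.induce {w : W | w ≠ σ v})
    (Γ : G.vertexDeck →g H)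
    (hΓ : ∀ (v : V) (u : {u : V // u ≠ v}), Γ ⟨v, u⟩ = ((γ v) u).1) :
    Nonempty (G ≃g H) ↔
      ∃ δ : G.vertexDeck →g G,
        (Function.Surjective δ ∧
          ∀ e ∈ G.edgeSet, ∃ d ∈ G.vertexDeck.edgeSet, Sym2.map δ d = e) ∧
        (∀ x y, Γ x = Γ y → δ x = δ y) := by
  have : Nontrivial V := Fintype.one_lt_card_iff_nontrivial.mp (by omega)
  have hΓs := SimpleGraph.surjective_vertexDeck_hom hΓ
  have hΓe := SimpleGraph.surjOn_edgeSet_vertexDeck_hom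
    (by simpa [ENat.card_eq_coe_fintype_card]) hΓ
  exact ⟨fun ⟨φ⟩ => φ.exists_hom_factorsThrough Γ hΓs hΓe,
    fun ⟨δ, ⟨hδ, hδe⟩, hδΓ⟩ =>
      SimpleGraph.nonempty_iso_of_factorsThrough σ Γ hΓs hΓe δ hδ hδe hδΓ⟩

/-- **Categorical equivalence to vertex-reconstructability.**  Given finite simple
graphs `G` and `H` with at least 3 vertices, a bijection `σ` of their vertex types
and isomorphisms `γ v : G − v ≅ H − σ v` of the vertex-deleted subgraphs, let `Γ` be
the homomorphism from the disjoint union `D` of the vertex-deleted subgraphs of `G`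
to `H` which acts on the component indexed by `v` as `γ v` followed by the inclusion
of `H − σ v` into `H`.  Then `G ≅ H` iff there is a homomorphism `δ : D → G` that is
surjective on vertices and edges and that coequalizes the kernel pair of `Γ`
(i.e. `Γ x = Γ y` implies `δ x = δ y`). -/
theorem vertex_reconstructable_iff {V W : Type} [Fintype V] [Fintype W]
    (G : SimpleGraph V) (H : SimpleGraph W)
    (hV : 3 ≤ Fintype.card V) (hW : 3 ≤ Fintype.card W)
    (σ : V ≃ W)
    (γ : ∀ v : V, G.induce {u : V | u ≠ v} ≃g H.induce {w : W | w ≠ σ v})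
    (Γ : G.vertexDeck →g H)
    (hΓ : ∀ (v : V) (u : {u : V // u ≠ v}), Γ ⟨v, u⟩ = ((γ v) u).1) :
    Nonempty (G ≃g H) ↔
      ∃ δ : G.vertexDeck →g G,
        (Function.Surjective δ ∧
          ∀ e ∈ G.edgeSet, ∃ d ∈ G.vertexDeck.edgeSet, Sym2.map δ d = e) ∧
        (∀ x y, Γ x = Γ y → δ x = δ y) :=
  vertex_reconstructable_iff_general G H hV σ γ Γ hΓ
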